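/- arXiv:2001.06319 — 3 statements merged into one kernel-verified Lean document; each statement's English description precedes it below -/
import Mathlib

section
/- The subspaces H¹_{Γ,Δ=0} (harmonic functions with continuous trace across Γ, i.e. γ₀¹u = 0) and K¹_{Γ,Δ=0} (harmonic functions with continuous normal derivative across Γ, i.e. γ₁¹u = 0, modulo constants on G) are orthogonal with respect to the inner product (u,v) = ∫_{G∪G'} ∇u·∇v. -/
open scoped RealInnerProductSpace

/-- `g0i, g0e` model the interior/exterior traces, `g1i, g1e` the interior/exterior normal
derivatives, `pair` the duality `W^{-1/2}₂(Γ) × W^{1/2}₂(Γ)`, and `hGreen` is Green's formula. -/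
theorem stmt_1
    {V Wp Wm : Type*} [NormedAddCommGroup V] [InnerProductSpace ℝ V]
    [NormedAddCommGroup Wp] [NormedSpace ℝ Wp]
    [NormedAddCommGroup Wm] [NormedSpace ℝ Wm]
    (g0i g0e : V →L[ℝ] Wp) (g1i g1e : V →L[ℝ] Wm)
    (pair : Wm →L[ℝ] Wp →L[ℝ] ℝ)
    (hGreen : ∀ u v : V, ⟪u, v⟫ = pair (g1i v) (g0i u) - pair (g1e v) (g0e u))
    : ∀ u v : V, g0i u - g0e u = 0 → g1i v - g1e v = 0 → ⟪u, v⟫ = 0 := by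
  intro u v h0 h1
  rw [hGreen, sub_eq_zero.mp h0, sub_eq_zero.mp h1, sub_self]
end

section
/- The symmetric bilinear form b((σ,q),(μ,ν)) := a(W(σ,q), W(μ,ν)) on W^{−1/2}₂(Γ) × W̃^{1/2}₂(Γ) is continuous and coercive: b((σ,q),(σ,q)) ≥ C₁‖σ‖²_{W^{−1/2}₂(Γ)} + C₂‖q‖²_{W̃^{1/2}₂(Γ)} for some constants C₁, C₂ > 0. -/
/-!
Both claims transfer the inner product of `V` back along the isomorphism `W`: continuity of
`b` is Cauchy–Schwarz in `V` together with the boundedness of `W`, and coercivity is the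
boundedness of `W⁻¹`, which gives `‖p‖ ≲ ‖W p‖`, so `b(p, p) = ‖W p‖² ≳ ‖p‖²`; on the product
with the max norm, `‖p‖²` dominates `(‖σ‖² + ‖q‖²) / 2`.
-/

open scoped RealInnerProductSpace

lemma Prod.sq_norm_fst_add_sq_norm_snd_le {E F : Type*} [SeminormedAddCommGroup E]
    [SeminormedAddCommGroup F] (p : E × F) : ‖p.1‖ ^ 2 + ‖p.2‖ ^ 2 ≤ 2 * ‖p‖ ^ 2 := by
  have hfst := pow_le_pow_left₀ (norm_nonneg _) (norm_fst_le p) 2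
  have hsnd := pow_le_pow_left₀ (norm_nonneg _) (norm_snd_le p) 2
  linarith

lemma ContinuousLinearEquiv.exists_pos_mul_norm_le {𝕜 E F : Type*} [NontriviallyNormedField 𝕜]
    [SeminormedAddCommGroup E] [NormedSpace 𝕜 E] [SeminormedAddCommGroup F] [NormedSpace 𝕜 F]
    (e : E ≃L[𝕜] F) : ∃ c, 0 < c ∧ ∀ x, c * ‖x‖ ≤ ‖e x‖ := by
  obtain ⟨N, hN, hsymm⟩ := exists_pos_bound_of_bound _ (e.symm : F →L[𝕜] E).le_opNorm
  refine ⟨N⁻¹, inv_pos.mpr hN, fun x => ?_⟩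
  rw [inv_mul_le_iff₀ hN]
  simpa using hsymm (e x)

section InnerPullback

variable {E V : Type*} [SeminormedAddCommGroup E] [NormedSpace ℝ E]
  [NormedAddCommGroup V] [InnerProductSpace ℝ V]

lemma ContinuousLinearMap.exists_pos_abs_inner_apply_le (f : E →L[ℝ] V) :
    ∃ M, 0 < M ∧ ∀ x y, |⟪f x, f y⟫| ≤ M * ‖x‖ * ‖y‖ := by
  obtain ⟨N, hN, hf⟩ := exists_pos_bound_of_bound _ f.le_opNorm
  refine ⟨N ^ 2, by positivity, fun x y => ?_⟩
  calc |⟪f x, f y⟫| ≤ ‖f x‖ * ‖f y‖ := abs_real_inner_le_norm _ _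
    _ ≤ (N * ‖x‖) * (N * ‖y‖) := mul_le_mul (hf x) (hf y) (norm_nonneg _) (by positivity)
    _ = N ^ 2 * ‖x‖ * ‖y‖ := by ring

lemma ContinuousLinearEquiv.exists_pos_mul_sq_norm_le_inner_self (e : E ≃L[ℝ] V) :
    ∃ c, 0 < c ∧ ∀ x, c * ‖x‖ ^ 2 ≤ ⟪e x, e x⟫ := by
  obtain ⟨c, hc, he⟩ := e.exists_pos_mul_norm_le
  refine ⟨c ^ 2, by positivity, fun x => ?_⟩
  rw [real_inner_self_eq_norm_sq, ← mul_pow]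
  exact pow_le_pow_left₀ (by positivity) (he x) 2

end InnerPullback

/-- `X` models `W^{-1/2}₂(Γ)` (densities `σ` of simple layer
potentials) and `Y` models `W̃^{1/2}₂(Γ)` (densities `q` of double layer
potentials); `V` models the Hilbert space `HK¹_{Γ,Δ=0}` with inner product
`a(w,z) = ∫_{G∪G'} ∇w·∇z`; by Theorem 3, `(σ,q) ↦ W(σ,q) = Uσ + Vq` is an
isomorphism `Wmap : X × Y ≃L V`.  Then the symmetric bilinear form
`b((σ,q),(μ,ν)) := a(W(σ,q), W(μ,ν))` on
`W^{-1/2}₂(Γ) × W̃^{1/2}₂(Γ)` is continuous, symmetric, and coercive: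
`b((σ,q),(σ,q)) ≥ C₁‖σ‖² + C₂‖q‖²` for some constants `C₁, C₂ > 0`. -/
theorem stmt_8
    {X Y V : Type*}
    [NormedAddCommGroup X] [NormedSpace ℝ X]
    [NormedAddCommGroup Y] [NormedSpace ℝ Y]
    [NormedAddCommGroup V] [InnerProductSpace ℝ V]
    (Wmap : (X × Y) ≃L[ℝ] V) :
    (∃ M : ℝ, 0 < M ∧ ∀ p p' : X × Y,
        |⟪Wmap p, Wmap p'⟫| ≤ M * ‖p‖ * ‖p'‖) ∧
    (∀ p p' : X × Y, ⟪Wmap p, Wmap p'⟫ = ⟪Wmap p', Wmap p⟫) ∧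
    (∃ C₁ C₂ : ℝ, 0 < C₁ ∧ 0 < C₂ ∧ ∀ σ : X, ∀ q : Y,
        ⟪Wmap (σ, q), Wmap (σ, q)⟫ ≥ C₁ * ‖σ‖ ^ 2 + C₂ * ‖q‖ ^ 2) := by
  refine ⟨(Wmap : (X × Y) →L[ℝ] V).exists_pos_abs_inner_apply_le,
    fun p p' => real_inner_comm _ _, ?_⟩
  obtain ⟨c, hc, hcoercive⟩ := Wmap.exists_pos_mul_sq_norm_le_inner_self
  refine ⟨c / 2, c / 2, by positivity, by positivity, fun σ q => ?_⟩
  calc c / 2 * ‖σ‖ ^ 2 + c / 2 * ‖q‖ ^ 2 = c / 2 * (‖σ‖ ^ 2 + ‖q‖ ^ 2) := by ring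
    _ ≤ c / 2 * (2 * ‖(σ, q)‖ ^ 2) :=
      mul_le_mul_of_nonneg_left (Prod.sq_norm_fst_add_sq_norm_snd_le (σ, q)) (by positivity)
    _ = c * ‖(σ, q)‖ ^ 2 := by ring
    _ ≤ ⟪Wmap (σ, q), Wmap (σ, q)⟫ := hcoercive (σ, q)
end

section
/- The boundary operator F mapping the pair of double-sided Neumann data (γ₁ⁱw, γ₁ᵉw) of the unique solution w ∈ HK¹_{Γ,Δ=0} to the pair of Dirichlet data (fⁱ, fᵉ) is a well-defined bijection between the admissible Neumann data pairs and the admissible Dirichlet data pairs {(fⁱ, fᵉ) ∈ W^{1/2}₂(Γ)² : fⁱ − fᵉ ∈ W̃^{1/2}₂(Γ)}, and both F and F⁻¹ are continuous. -/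
/-!
Both double-sided problems are well posed, so the Neumann trace `w ↦ (γ₁ⁱw, γ₁ᵉw)` and the
Dirichlet trace `w ↦ (γ₀ⁱw, γ₀ᵉw)` are homeomorphisms of `HK¹_{Γ,Δ=0}` onto their data
spaces, with the solution operators as inverses. `F` is the Dirichlet trace composed with the
inverse of the Neumann trace.
-/

def Homeomorph.ofSolutionOperator {X D : Type*} [TopologicalSpace X] [TopologicalSpace D]
    (trace : X → D) (solve : D → X) (h_trace : Continuous trace) (h_solve : Continuous solve)
    (h_exists : ∀ d, trace (solve d) = d) (h_unique : ∀ x d, trace x = d → x = solve d) :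
    X ≃ₜ D where
  toFun := trace
  invFun := solve
  left_inv x := (h_unique x _ rfl).symm
  right_inv := h_exists
  continuous_toFun := h_trace
  continuous_invFun := h_solve

-- `V` models `HK¹_{Γ,Δ=0}`, `W` and `Wm` the spaces `W^{±1/2}₂(Γ)`, `Wt ⊆ W` the space
-- `W̃^{1/2}₂(Γ)`; `d_•` and `n_•` are the Dirichlet and Neumann traces, `SD` and `SN` the
-- solution operators of Theorems 6 and 10.
/-- Section IV: the boundary operator `F`. `V` models
`HK¹_{Γ,Δ=0}`; `d_i, d_e` are the Dirichlet traces into `W = W^{1/2}₂(Γ)` and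
`n_i, n_e` the Neumann traces into `Wm = W^{-1/2}₂(Γ)`; `Wt` models
`W̃^{1/2}₂(Γ)` as a subspace of `W`, and every element of `V` has Dirichlet
jump in `Wt` (`hjump`).  By Theorem 10 the double-sided Neumann problem has a
continuous solution operator `SN` (`hSN`) and the solution is unique
(`hNuniq`); by Theorem 6 the double-sided Dirichlet problem with admissible
data (`fⁱ − fᵉ ∈ W̃^{1/2}₂(Γ)`) has a continuous solution operator `SD`
(`hSD`) with unique solution (`hDuniq`).  Conclusion: the boundary operator
`F`, mapping the Neumann data `(γ₁ⁱw, γ₁ᵉw)` of the unique solution `w` to its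
Dirichlet data `(fⁱ, fᵉ)`, is a well-defined bijection from the Neumann data
pairs `W^{-1/2}₂(Γ)²` onto the admissible Dirichlet data pairs
`{(fⁱ, fᵉ) : fⁱ − fᵉ ∈ W̃^{1/2}₂(Γ)}`, continuous together with its
inverse — i.e. a homeomorphism. -/
theorem stmt_14
    {V W Wm : Type*} [NormedAddCommGroup V] [NormedSpace ℝ V]
    [NormedAddCommGroup W] [NormedSpace ℝ W]
    [NormedAddCommGroup Wm] [NormedSpace ℝ Wm]
    (Wt : Submodule ℝ W)
    (d_i d_e : V →L[ℝ] W) (n_i n_e : V →L[ℝ] Wm)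
    (hjump : ∀ w : V, d_i w - d_e w ∈ Wt)
    (SN : (Wm × Wm) →L[ℝ] V)
    (hSN : ∀ g : Wm × Wm, n_i (SN g) = g.1 ∧ n_e (SN g) = g.2)
    (hNuniq : ∀ g : Wm × Wm, ∀ w : V, n_i w = g.1 ∧ n_e w = g.2 → w = SN g)
    (SD : (W × W) →L[ℝ] V)
    (hSD : ∀ f : W × W, f.1 - f.2 ∈ Wt → d_i (SD f) = f.1 ∧ d_e (SD f) = f.2)
    (hDuniq : ∀ f : W × W, f.1 - f.2 ∈ Wt →
      ∀ w : V, d_i w = f.1 ∧ d_e w = f.2 → w = SD f) :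
    ∃ F : (Wm × Wm) ≃ₜ {f : W × W // f.1 - f.2 ∈ Wt},
      ∀ g : Wm × Wm, (F g : W × W) = (d_i (SN g), d_e (SN g)) := by
  let neumannTrace : V ≃ₜ Wm × Wm :=
    .ofSolutionOperator (fun w => (n_i w, n_e w)) SN (by fun_prop) SN.continuous
      (fun g => Prod.ext (hSN g).1 (hSN g).2)
      (fun w g hg => hNuniq g w ⟨congrArg Prod.fst hg, congrArg Prod.snd hg⟩)
  let dirichletTrace : V ≃ₜ {f : W × W // f.1 - f.2 ∈ Wt} :=
    .ofSolutionOperator (fun w => ⟨(d_i w, d_e w), hjump w⟩) (fun f => SD f) (by fun_prop)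
      (by fun_prop)
      (fun f => Subtype.ext (Prod.ext (hSD f f.2).1 (hSD f f.2).2))
      (fun w f hf => hDuniq f f.2 w
        ⟨congrArg (·.1.1) hf, congrArg (·.1.2) hf⟩)
  exact ⟨neumannTrace.symm.trans dirichletTrace, fun _ => rfl⟩
end
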